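/- arXiv:2601.01575 — 7 statements merged into one kernel-verified Lean document; each statement's English description precedes it below -/
import Mathlib

section
/- Let A be a symmetric real n×n matrix, b ∈ ℝⁿ nonzero with grade g with respect to A, and let 1 ≤ t ≤ g. For 0 ≤ s ≤ t−1 let p_s be a minimizer of ‖b − A p‖ over p ∈ K_s(A,b) (with p_0 = 0) and r_s := b − A p_s. If r_sᵀ A r_s > 0 for all 0 ≤ s ≤ t−1, then A is positive definite on K_t(A,b), i.e., xᵀ A x > 0 for every nonzero x ∈ K_t(A,b). -/
open Matrix

/-- The Euclidean norm on `Fin n → ℝ`. -/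
noncomputable def euclNorm {n : ℕ} (v : Fin n → ℝ) : ℝ := Real.sqrt (∑ i, v i ^ 2)

/-- The Krylov subspace `K_t(A,b) = span {b, Ab, …, A^{t-1} b}` (with `K_0 = {0}`). -/
noncomputable def Krylov {n : ℕ} (A : Matrix (Fin n) (Fin n) ℝ) (b : Fin n → ℝ) (t : ℕ) :
    Submodule ℝ (Fin n → ℝ) :=
  Submodule.span ℝ (Set.range fun i : Fin t => (A ^ (i : ℕ)).mulVec b)

/-- `g` is the grade of `b` with respect to `A`: `dim K_t(A,b) = t` for `t ≤ g` and
`dim K_t(A,b) = g` for `t > g`. -/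
def IsGrade {n : ℕ} (A : Matrix (Fin n) (Fin n) ℝ) (b : Fin n → ℝ) (g : ℕ) : Prop :=
  0 < g ∧ (∀ t : ℕ, t ≤ g → Module.finrank ℝ (Krylov A b t) = t) ∧
    (∀ t : ℕ, g < t → Module.finrank ℝ (Krylov A b t) = g)

lemma krylov_mono {n : ℕ} (A : Matrix (Fin n) (Fin n) ℝ) (b : Fin n → ℝ) {s t : ℕ}
    (h : s ≤ t) : Krylov A b s ≤ Krylov A b t := by
  apply Submodule.span_mono
  rintro _ ⟨i, rfl⟩
  exact ⟨⟨i, lt_of_lt_of_le i.2 h⟩, rfl⟩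

lemma mulVec_mem_krylov {n : ℕ} (A : Matrix (Fin n) (Fin n) ℝ) (b : Fin n → ℝ) {s : ℕ}
    {x : Fin n → ℝ} (hx : x ∈ Krylov A b s) : A.mulVec x ∈ Krylov A b (s+1) := by
  induction hx using Submodule.span_induction with
  | mem v hv =>
      obtain ⟨i, rfl⟩ := hv
      rw [Matrix.mulVec_mulVec, ← pow_succ']
      exact Submodule.subset_span ⟨⟨(i : ℕ)+1, by omega⟩, rfl⟩
  | zero => simp
  | add x y _ _ hx hy => rw [Matrix.mulVec_add]; exact add_mem hx hy
  | smul a x _ hx => rw [Matrix.mulVec_smul]; exact Submodule.smul_mem _ a hx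

lemma b_mem_krylov {n : ℕ} (A : Matrix (Fin n) (Fin n) ℝ) (b : Fin n → ℝ) {s : ℕ}
    (hs : 0 < s) : b ∈ Krylov A b s :=
  Submodule.subset_span ⟨⟨0, hs⟩, by simp⟩


/-- Let `A` be symmetric, `b ≠ 0` with grade `g`, and `1 ≤ t ≤ g`. If for each
`0 ≤ s ≤ t−1` the MINRES iterate `p s` (a minimizer of `‖b − A q‖` over `K_s(A,b)`) has
residual `r_s = b − A (p s)` with `r_sᵀ A r_s > 0`, then `A` is positive definite on
`K_t(A,b)`. -/
theorem posdef_on_krylov {n : ℕ} (A : Matrix (Fin n) (Fin n) ℝ) (hA : A.IsSymm)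
    (b : Fin n → ℝ) (hb : b ≠ 0) (g : ℕ) (hg : IsGrade A b g)
    (t : ℕ) (ht : 1 ≤ t) (htg : t ≤ g)
    (p : ℕ → Fin n → ℝ)
    (hmem : ∀ s < t, p s ∈ Krylov A b s)
    (hmin : ∀ s < t, ∀ q ∈ Krylov A b s,
      euclNorm (b - A.mulVec (p s)) ≤ euclNorm (b - A.mulVec q))
    (hnpc : ∀ s < t, 0 < (b - A.mulVec (p s)) ⬝ᵥ A.mulVec (b - A.mulVec (p s))) :
    ∀ x ∈ Krylov A b t, x ≠ 0 → 0 < x ⬝ᵥ A.mulVec x := by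
  classical
  have hfin : ∀ u : ℕ, u ≤ g → Module.finrank ℝ (Krylov A b u) = u := hg.2.1
  -- symmetric bilinear form identity
  have hsym : ∀ v w : Fin n → ℝ, v ⬝ᵥ A.mulVec w = A.mulVec v ⬝ᵥ w := by
    intro v w
    rw [Matrix.dotProduct_mulVec, ← Matrix.mulVec_transpose, hA]
  -- euclNorm comparison gives dot-product comparison
  have hdot : ∀ v w : Fin n → ℝ, euclNorm v ≤ euclNorm w → v ⬝ᵥ v ≤ w ⬝ᵥ w := by
    intro v w h
    by_contra hc
    push_neg at hc
    have hv : ∀ u : Fin n → ℝ, u ⬝ᵥ u = ∑ i, u i ^ 2 := fun u => by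
      simp [dotProduct, pow_two]
    rw [hv, hv] at hc
    have := Real.sqrt_lt_sqrt (by positivity) hc
    rw [euclNorm, euclNorm] at h
    linarith
  -- residual is orthogonal to A · Krylov s
  have horth : ∀ s < t, ∀ y ∈ Krylov A b s,
      (b - A.mulVec (p s)) ⬝ᵥ A.mulVec y = 0 := by
    intro s hs y hy
    set r := b - A.mulVec (p s) with hr
    set u := A.mulVec y with hu
    set c := r ⬝ᵥ u with hcdef
    set d := u ⬝ᵥ u with hddef
    have key : ∀ ε : ℝ, 0 ≤ -(2*ε*c) + ε^2 * d := by
      intro ε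
      have hq : p s + ε • y ∈ Krylov A b s :=
        add_mem (hmem s hs) (Submodule.smul_mem _ _ hy)
      have h2 := hdot _ _ (hmin s hs _ hq)
      have e1 : b - A.mulVec (p s + ε • y) = r - ε • u := by
        rw [Matrix.mulVec_add, Matrix.mulVec_smul, hr, hu]; abel
      rw [e1] at h2
      have expand : (r - ε • u) ⬝ᵥ (r - ε • u)
          = r ⬝ᵥ r - (2*ε*c) + ε^2 * d := by
        simp only [sub_dotProduct, dotProduct_sub, smul_dotProduct, dotProduct_smul,
          smul_eq_mul, ← hcdef, ← hddef, dotProduct_comm u r]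
        ring
      rw [expand] at h2
      linarith
    have hd0 : 0 ≤ d := by
      rw [hddef]
      exact Finset.sum_nonneg fun i _ => mul_self_nonneg _
    have hc0 : c = 0 := by
      rcases eq_or_lt_of_le hd0 with hdz | hdp
      · have := key c
        nlinarith [sq_nonneg c]
      · have hk := key (c/d)
        have he : -(2*(c/d)*c) + (c/d)^2 * d = -(c^2/d) := by
          field_simp
          ring
        rw [he] at hk
        have : c^2/d ≤ 0 := by linarith
        have h2 : c^2 ≤ 0 := by
          by_contra hpos
          push_neg at hpos
          exact absurd (div_pos hpos hdp) (by linarith)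
        nlinarith [sq_nonneg c]
    exact hc0
  -- residual not in Krylov s, and Krylov (s+1) = Krylov s ⊔ span r
  have hsup : ∀ s < t, Krylov A b (s+1)
      = Krylov A b s ⊔ Submodule.span ℝ {b - A.mulVec (p s)} := by
    intro s hs
    set r := b - A.mulVec (p s) with hr
    have hrmem : r ∈ Krylov A b (s+1) :=
      sub_mem (b_mem_krylov A b (Nat.succ_pos s)) (mulVec_mem_krylov A b (hmem s hs))
    have hrnot : r ∉ Krylov A b s := by
      intro h
      have := horth s hs r h
      have := hnpc s hs
      rw [← hr] at this
      linarith
    symm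
    apply Submodule.eq_of_le_of_finrank_le
    · exact sup_le (krylov_mono A b (Nat.le_succ s))
        (Submodule.span_le.2 (Set.singleton_subset_iff.2 hrmem))
    · have hlt : Krylov A b s < Krylov A b s ⊔ Submodule.span ℝ {r} := by
        refine lt_of_le_of_ne le_sup_left ?_
        intro he
        apply hrnot
        rw [he]
        exact Submodule.mem_sup_right (Submodule.mem_span_singleton_self r)
      have hd := Submodule.finrank_lt_finrank_of_lt hlt
      rw [hfin s (by omega)] at hd
      rw [hfin (s+1) (by omega)]
      omega
  have main : ∀ s, s ≤ t → ∀ x ∈ Krylov A b s, x ≠ 0 → 0 < x ⬝ᵥ A.mulVec x := by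
    intro s
    induction s with
    | zero =>
        intro _ x hx hx0
        exfalso
        apply hx0
        have h0 : Krylov A b 0 = ⊥ := by
          rw [Krylov]
          simp
        simpa [h0] using hx
    | succ s ih =>
        intro hst x hx hx0
        have hs : s < t := by omega
        rw [hsup s hs] at hx
        obtain ⟨y, hy, z, hz, rfl⟩ := Submodule.mem_sup.mp hx
        obtain ⟨α, rfl⟩ := Submodule.mem_span_singleton.mp hz
        set r := b - A.mulVec (p s) with hrdef
        have h1 : r ⬝ᵥ A.mulVec y = 0 := horth s hs y hy
        have h2 : y ⬝ᵥ A.mulVec r = 0 := by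
          rw [hsym, dotProduct_comm]; exact h1
        have hrr : 0 < r ⬝ᵥ A.mulVec r := hnpc s hs
        have expand : (y + α • r) ⬝ᵥ A.mulVec (y + α • r)
            = y ⬝ᵥ A.mulVec y + α * (y ⬝ᵥ A.mulVec r) + α * (r ⬝ᵥ A.mulVec y)
              + α^2 * (r ⬝ᵥ A.mulVec r) := by
          simp only [Matrix.mulVec_add, Matrix.mulVec_smul, dotProduct_add,
            add_dotProduct, dotProduct_smul, smul_dotProduct, smul_eq_mul]
          ring
        rw [expand, h1, h2]
        by_cases hy0 : y = 0
        · have hα : α ≠ 0 := by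
            intro h
            exact hx0 (by simp [hy0, h])
          have : 0 < α^2 := by positivity
          simp only [hy0, zero_dotProduct]
          nlinarith
        · have hpos := ih (by omega) y hy hy0
          nlinarith [mul_nonneg (sq_nonneg α) (le_of_lt hrr)]
  exact main t le_rfl
end

section
/- Let A be a symmetric real n×n matrix, let 1 ≤ t ≤ n, and let V be a real n×t matrix whose columns are orthonormal. Then for every 1 ≤ i ≤ t, the i-th largest eigenvalue of the symmetric t×t matrix VᵀAV is less than or equal to the i-th largest eigenvalue of A. -/
open Matrix Polynomial

/-- `μ` lists the eigenvalues of the square real matrix `M` in non-increasing order,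
counted with multiplicity: `μ` is antitone and the characteristic polynomial of `M`
factors as `∏ i (X − μ i)`. -/
def IsNonincEigList {m : ℕ} (M : Matrix (Fin m) (Fin m) ℝ) (μ : Fin m → ℝ) : Prop :=
  Antitone μ ∧ M.charpoly = ∏ i, (X - C (μ i))

namespace InterlacingAux

open Finset
open scoped RealInnerProductSpace

variable {m : ℕ}

lemma charpoly_conj' (U D W : Matrix (Fin m) (Fin m) ℝ) (hWU : W * U = 1) :
    (U * D * W).charpoly = D.charpoly := by
  have hUW : U * W = 1 := mul_eq_one_comm.mp hWU
  have hmap : U.map (C : ℝ →+* ℝ[X]) * W.map C = 1 := by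
    rw [← Matrix.map_mul, hUW]; simp
  have hcm : charmatrix (U * D * W)
      = U.map C * charmatrix D * W.map C := by
    unfold charmatrix
    rw [Matrix.mul_sub, Matrix.sub_mul]
    congr 1
    · rw [Matrix.scalar_apply, ← Matrix.smul_one_eq_diagonal, Matrix.mul_smul,
        Matrix.smul_mul, mul_one, hmap]
    · simp only [RingHom.mapMatrix_apply, ← Matrix.map_mul]
  unfold Matrix.charpoly
  rw [hcm, Matrix.det_mul, Matrix.det_mul, mul_comm, ← mul_assoc, ← Matrix.det_mul]
  have hmap2 : W.map (C : ℝ →+* ℝ[X]) * U.map C = 1 := by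
    rw [← Matrix.map_mul, hWU]; simp
  rw [hmap2]
  simp

lemma charpoly_eq_prod_eigenvalues {M : Matrix (Fin m) (Fin m) ℝ} (hM : M.IsHermitian) :
    M.charpoly = ∏ i, (X - C (hM.eigenvalues i)) := by
  have hspec := hM.spectral_theorem
  have h1 : (star (hM.eigenvectorUnitary : Matrix (Fin m) (Fin m) ℝ)) *
      (hM.eigenvectorUnitary : Matrix (Fin m) (Fin m) ℝ) = 1 :=
    Unitary.coe_star_mul_self _
  conv_lhs => rw [hspec, Unitary.conjStarAlgAut_apply]
  rw [charpoly_conj' _ _ _ h1]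
  have hd : (Matrix.diagonal (RCLike.ofReal ∘ hM.eigenvalues) : Matrix (Fin m) (Fin m) ℝ)
      = Matrix.diagonal hM.eigenvalues := by
    congr 1
  rw [hd, Matrix.charpoly_of_upperTriangular _ (Matrix.blockTriangular_diagonal _)]
  simp

lemma count_filter_eq' {μ ν : Fin m → ℝ}
    (h : ∏ i, (X - C (μ i)) = ∏ i, (X - C (ν i)))
    (p : ℝ → Prop) [DecidablePred p] :
    (univ.filter fun j => p (μ j)).card = (univ.filter fun j => p (ν j)).card := by
  have key : Multiset.map μ Finset.univ.val = Multiset.map ν Finset.univ.val := by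
    have h1 : ((Multiset.map μ Finset.univ.val).map (fun a : ℝ => X - C a)).prod
        = ((Multiset.map ν Finset.univ.val).map (fun a : ℝ => X - C a)).prod := by
      rw [Multiset.map_map, Multiset.map_map]
      exact h
    have h2 := congrArg Polynomial.roots h1
    rwa [Polynomial.roots_multiset_prod_X_sub_C, Polynomial.roots_multiset_prod_X_sub_C] at h2
  have h3 := congrArg (Multiset.countP fun a => p a) key
  rw [Multiset.countP_map, Multiset.countP_map] at h3
  simp only [Finset.card, Finset.filter_val, Multiset.countP_eq_card_filter]
  exact h3

variable {M : Matrix (Fin m) (Fin m) ℝ} (hM : M.IsHermitian)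

lemma toEuclideanLin_eigen (j : Fin m) :
    Matrix.toEuclideanLin M (hM.eigenvectorBasis j)
      = hM.eigenvalues j • hM.eigenvectorBasis j := by
  apply (WithLp.equiv 2 _).injective
  have := hM.mulVec_eigenvectorBasis j
  simpa [Matrix.ofLp_toEuclideanLin_apply] using this

lemma repr_toEuclideanLin (x : EuclideanSpace ℝ (Fin m)) (i : Fin m) :
    hM.eigenvectorBasis.repr (Matrix.toEuclideanLin M x) i
      = hM.eigenvalues i * hM.eigenvectorBasis.repr x i := by
  set e := hM.eigenvectorBasis
  have hx : Matrix.toEuclideanLin M x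
      = ∑ j, (e.repr x j * hM.eigenvalues j) • e j := by
    conv_lhs => rw [← e.sum_repr x, map_sum]
    refine Finset.sum_congr rfl fun j _ => ?_
    rw [LinearMap.map_smul, toEuclideanLin_eigen hM j, smul_smul]
  rw [e.repr_apply_apply, hx, inner_sum]
  have ho := orthonormal_iff_ite.mp e.orthonormal
  simp only [real_inner_smul_right, ho]
  simp [mul_comm, e.repr_apply_apply]

lemma repr_eq_zero_of_mem_span (J : Finset (Fin m)) {x : EuclideanSpace ℝ (Fin m)}
    (hx : x ∈ Submodule.span ℝ (hM.eigenvectorBasis '' (J : Set (Fin m))))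
    {i : Fin m} (hi : i ∉ J) : hM.eigenvectorBasis.repr x i = 0 := by
  set e := hM.eigenvectorBasis
  induction hx using Submodule.span_induction with
  | mem y hy =>
    obtain ⟨j, hj, rfl⟩ := hy
    rw [e.repr_self]
    have : i ≠ j := fun h => hi (h ▸ hj)
    simp [EuclideanSpace.single_apply, this]
  | zero => simp
  | add y z _ _ hy hz => rw [map_add]; simp [hy, hz]
  | smul c y _ hy => rw [_root_.map_smul]; simp [hy]

lemma inner_repr (x y : EuclideanSpace ℝ (Fin m)) :
    ⟪x, y⟫ = ∑ i, hM.eigenvectorBasis.repr x i * hM.eigenvectorBasis.repr y i := by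
  rw [← LinearIsometryEquiv.inner_map_map hM.eigenvectorBasis.repr x y, PiLp.inner_apply]
  simp [RCLike.inner_apply, conj_trivial, mul_comm]

lemma quad_eq_sum (J : Finset (Fin m)) {x : EuclideanSpace ℝ (Fin m)}
    (hx : x ∈ Submodule.span ℝ (hM.eigenvectorBasis '' (J : Set (Fin m)))) :
    ⟪x, Matrix.toEuclideanLin M x⟫
      = ∑ j ∈ J, hM.eigenvalues j * (hM.eigenvectorBasis.repr x j)^2 ∧
    ⟪x, x⟫ = ∑ j ∈ J, (hM.eigenvectorBasis.repr x j)^2 := by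
  set e := hM.eigenvectorBasis
  constructor
  · rw [inner_repr hM]
    rw [← Finset.sum_subset (Finset.subset_univ J) (fun i _ hi => by
      rw [repr_eq_zero_of_mem_span hM J hx hi]; ring_nf)]
    refine Finset.sum_congr rfl fun j _ => ?_
    rw [repr_toEuclideanLin hM]; ring
  · rw [inner_repr hM]
    rw [← Finset.sum_subset (Finset.subset_univ J) (fun i _ hi => by
      rw [repr_eq_zero_of_mem_span hM J hx hi]; ring_nf)]
    refine Finset.sum_congr rfl fun j _ => ?_
    ring

lemma finrank_span_eigen (J : Finset (Fin m)) :
    Module.finrank ℝ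
      (Submodule.span ℝ (hM.eigenvectorBasis '' (J : Set (Fin m)))) = J.card := by
  have li : LinearIndependent ℝ (fun j : (J : Set (Fin m)) => hM.eigenvectorBasis j) :=
    hM.eigenvectorBasis.orthonormal.linearIndependent.comp _ Subtype.val_injective
  rw [Set.image_eq_range, finrank_span_eq_card li]
  simp

lemma exists_ne_zero_mem_inf (s t : Submodule ℝ (EuclideanSpace ℝ (Fin m)))
    (h : m < Module.finrank ℝ s + Module.finrank ℝ t) :
    ∃ z : EuclideanSpace ℝ (Fin m), z ∈ s ⊓ t ∧ z ≠ 0 := by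
  have h1 := Submodule.finrank_sup_add_finrank_inf_eq s t
  have h2 : Module.finrank ℝ ↥(s ⊔ t) ≤ m := by
    simpa using Submodule.finrank_le (s ⊔ t)
  have h3 : 0 < Module.finrank ℝ ↥(s ⊓ t) := by omega
  obtain ⟨⟨z, hz⟩, hz0⟩ := Module.finrank_pos_iff_exists_ne_zero.mp h3
  exact ⟨z, hz, fun h => hz0 (Subtype.ext h)⟩

end InterlacingAux

/-- Let `A` be a symmetric real `n×n` matrix, `1 ≤ t ≤ n`, and `V` an `n×t`
matrix with orthonormal columns (`Vᵀ V = I`). Then for every `1 ≤ i ≤ t`, the `i`-th largest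
eigenvalue of `Vᵀ A V` is at most the `i`-th largest eigenvalue of `A`. -/
theorem eigenvalue_interlacing {n t : ℕ} (ht : 1 ≤ t) (htn : t ≤ n)
    (A : Matrix (Fin n) (Fin n) ℝ) (hA : A.IsSymm)
    (V : Matrix (Fin n) (Fin t) ℝ) (hV : Vᵀ * V = 1)
    (μA : Fin n → ℝ) (hμA : IsNonincEigList A μA)
    (μB : Fin t → ℝ) (hμB : IsNonincEigList (Vᵀ * A * V) μB) :
    ∀ i : Fin t, μB i ≤ μA (Fin.castLE htn i) := by
  classical
  open InterlacingAux Finset in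
  open scoped RealInnerProductSpace in
  intro i
  set i' : Fin n := Fin.castLE htn i with hi'
  have hA' : A.IsHermitian := by
    rw [Matrix.IsHermitian, Matrix.conjTranspose_eq_transpose_of_trivial]; exact hA
  have hB' : (Vᵀ * A * V).IsHermitian := by
    rw [Matrix.IsHermitian, Matrix.conjTranspose_eq_transpose_of_trivial]
    simp [Matrix.transpose_mul, Matrix.mul_assoc, hA.eq]
  -- charpoly identities
  have hcB : (∏ j, (X - C (μB j))) = ∏ j, (X - C (hB'.eigenvalues j)) := by
    rw [← hμB.2, charpoly_eq_prod_eigenvalues hB']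
  have hcA : (∏ j, (X - C (μA j))) = ∏ j, (X - C (hA'.eigenvalues j)) := by
    rw [← hμA.2, charpoly_eq_prod_eigenvalues hA']
  -- index sets
  set JB : Finset (Fin t) := univ.filter fun j => μB i ≤ hB'.eigenvalues j with hJBdef
  set JA : Finset (Fin n) := univ.filter fun j => hA'.eigenvalues j ≤ μA i' with hJAdef
  have hJB : (i : ℕ) + 1 ≤ JB.card := by
    rw [hJBdef, ← count_filter_eq' hcB (fun a => μB i ≤ a)]
    calc (i : ℕ) + 1 = (Finset.Iic i).card := by rw [Fin.card_Iic]
      _ ≤ _ := Finset.card_le_card fun j hj => by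
          simp only [Finset.mem_filter, Finset.mem_univ, true_and]
          exact hμB.1 (Finset.mem_Iic.mp hj)
  have hJA : n - (i : ℕ) ≤ JA.card := by
    rw [hJAdef, ← count_filter_eq' hcA (fun a => a ≤ μA i')]
    calc n - (i : ℕ) = (Finset.Ici i').card := by rw [Fin.card_Ici]; rfl
      _ ≤ _ := Finset.card_le_card fun j hj => by
          simp only [Finset.mem_filter, Finset.mem_univ, true_and]
          exact hμA.1 (Finset.mem_Ici.mp hj)
  -- subspaces
  set S : Submodule ℝ (EuclideanSpace ℝ (Fin t)) :=
    Submodule.span ℝ (hB'.eigenvectorBasis '' (JB : Set (Fin t))) with hSdef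
  set T : Submodule ℝ (EuclideanSpace ℝ (Fin n)) :=
    Submodule.span ℝ (hA'.eigenvectorBasis '' (JA : Set (Fin n))) with hTdef
  set φ : EuclideanSpace ℝ (Fin t) →ₗ[ℝ] EuclideanSpace ℝ (Fin n) :=
    Matrix.toEuclideanLin V with hφdef
  have hVtV : ∀ z : Fin t → ℝ, Vᵀ *ᵥ (V *ᵥ z) = z := by
    intro z; rw [Matrix.mulVec_mulVec, hV, Matrix.one_mulVec]
  have hφinj : Function.Injective φ := by
    intro x y hxy
    have h0 : V *ᵥ (WithLp.equiv 2 _ x) = V *ᵥ (WithLp.equiv 2 _ y) := by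
      have := congrArg (WithLp.equiv 2 _) hxy
      simpa [hφdef, Matrix.ofLp_toEuclideanLin_apply] using this
    apply (WithLp.equiv 2 _).injective
    rw [← hVtV (WithLp.equiv 2 _ x), ← hVtV (WithLp.equiv 2 _ y), h0]
  have hrankS : (i : ℕ) + 1 ≤ Module.finrank ℝ (S.map φ) := by
    rw [← (Submodule.equivMapOfInjective φ hφinj S).finrank_eq, hSdef,
      finrank_span_eigen hB' JB]
    exact hJB
  have hrankT : n - (i : ℕ) ≤ Module.finrank ℝ T := by
    rw [hTdef, finrank_span_eigen hA' JA]
    exact hJA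
  have hin : (i : ℕ) < n := lt_of_lt_of_le i.isLt htn
  obtain ⟨z, hzmem, hz0⟩ := exists_ne_zero_mem_inf (S.map φ) T (by omega)
  obtain ⟨hzS, hzT⟩ := hzmem
  obtain ⟨x, hxS, rfl⟩ := Submodule.mem_map.mp hzS
  have hx0 : x ≠ 0 := fun h => hz0 (by rw [h, map_zero])
  -- quadratic form bounds
  obtain ⟨hq1, hq2⟩ := quad_eq_sum hB' JB hxS
  have key1 : μB i * ⟪x, x⟫ ≤ ⟪x, Matrix.toEuclideanLin (Vᵀ * A * V) x⟫ := by
    rw [hq1, hq2, Finset.mul_sum]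
    refine Finset.sum_le_sum fun j hj => ?_
    have hj' : μB i ≤ hB'.eigenvalues j := by
      rw [hJBdef] at hj
      exact (Finset.mem_filter.mp hj).2
    exact mul_le_mul_of_nonneg_right hj' (sq_nonneg _)
  obtain ⟨hq3, hq4⟩ := quad_eq_sum hA' JA hzT
  have key2 : ⟪φ x, Matrix.toEuclideanLin A (φ x)⟫ ≤ μA i' * ⟪φ x, φ x⟫ := by
    rw [hq3, hq4, Finset.mul_sum]
    refine Finset.sum_le_sum fun j hj => ?_
    have hj' : hA'.eigenvalues j ≤ μA i' := by
      rw [hJAdef] at hj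
      exact (Finset.mem_filter.mp hj).2
    exact mul_le_mul_of_nonneg_right hj' (sq_nonneg _)
  -- transfer inner products
  have hdot : ∀ {k : ℕ} (a b : EuclideanSpace ℝ (Fin k)),
      ⟪a, b⟫ = (WithLp.equiv 2 _ a) ⬝ᵥ (WithLp.equiv 2 _ b) := by
    intro k a b
    rw [PiLp.inner_apply]
    simp [RCLike.inner_apply, conj_trivial, dotProduct, mul_comm]
  set ex := WithLp.equiv 2 (Fin t → ℝ) x with hexdef
  have hφx : WithLp.equiv 2 (Fin n → ℝ) (φ x) = V *ᵥ ex := by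
    rw [hφdef]; exact Matrix.ofLp_toEuclideanLin_apply V x
  have e1 : ⟪x, Matrix.toEuclideanLin (Vᵀ * A * V) x⟫
      = ⟪φ x, Matrix.toEuclideanLin A (φ x)⟫ := by
    simp only [hdot, hφdef, WithLp.equiv_apply, Matrix.ofLp_toEuclideanLin_apply]
    have hmv : (Vᵀ * A * V) *ᵥ ex = Vᵀ *ᵥ (A *ᵥ (V *ᵥ ex)) := by
      rw [Matrix.mulVec_mulVec, Matrix.mulVec_mulVec, Matrix.mul_assoc]
    rw [show x.ofLp = ex from rfl, hmv, Matrix.dotProduct_mulVec, Matrix.vecMul_transpose]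
  have e2 : ⟪φ x, φ x⟫ = ⟪x, x⟫ := by
    rw [hdot, hdot, hφx]
    rw [Matrix.dotProduct_mulVec, ← Matrix.mulVec_transpose, hVtV]
  have hxx : 0 < ⟪x, x⟫ := by
    rw [real_inner_self_eq_norm_sq]
    exact pow_pos (norm_pos_iff.mpr hx0) 2
  have hfinal : μB i * ⟪x, x⟫ ≤ μA i' * ⟪x, x⟫ := by
    calc μB i * ⟪x, x⟫ ≤ ⟪x, Matrix.toEuclideanLin (Vᵀ * A * V) x⟫ := key1
      _ = ⟪φ x, Matrix.toEuclideanLin A (φ x)⟫ := e1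
      _ ≤ μA i' * ⟪φ x, φ x⟫ := key2
      _ = μA i' * ⟪x, x⟫ := by rw [e2]
  exact le_of_mul_le_mul_right hfinal hxx
end

section
/- Let A be a symmetric real n×n matrix and b ∈ ℝⁿ a nonzero vector with grade g with respect to A. If p* is any minimizer of ‖b − A p‖ over p ∈ K_g(A,b) and r* := b − A p*, then A r* = 0 and ‖b − A p*‖ = min_{p ∈ ℝⁿ} ‖b − A p‖; that is, after g iterations the minimal residual iterate solves the full least-squares problem and its residual lies in the kernel of A. -/
open Matrix

lemma dot_self_nonneg {n : ℕ} (v : Fin n → ℝ) : 0 ≤ v ⬝ᵥ v :=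
  Finset.sum_nonneg fun i _ => mul_self_nonneg (v i)

lemma dot_self_eq_zero {n : ℕ} {v : Fin n → ℝ} (h : v ⬝ᵥ v = 0) : v = 0 := by
  funext i
  have := (Finset.sum_eq_zero_iff_of_nonneg (fun j _ => mul_self_nonneg (v j))).1 h i
    (Finset.mem_univ i)
  exact mul_self_eq_zero.1 this

lemma euclNorm_eq {n : ℕ} (v : Fin n → ℝ) : euclNorm v = Real.sqrt (v ⬝ᵥ v) := by
  simp [euclNorm, dotProduct, sq]

lemma euclNorm_le_iff {n : ℕ} (u w : Fin n → ℝ) :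
    euclNorm u ≤ euclNorm w ↔ u ⬝ᵥ u ≤ w ⬝ᵥ w := by
  rw [euclNorm_eq, euclNorm_eq]
  exact Real.sqrt_le_sqrt_iff (dot_self_nonneg w)

/-- Let `A` be symmetric and `b ≠ 0` with grade `g`. If `p` minimizes
`‖b − A q‖` over `q ∈ K_g(A,b)` with residual `r = b − A p`, then `A r = 0` and `p` solves
the full least-squares problem: `‖b − A p‖ ≤ ‖b − A q‖` for all `q ∈ ℝⁿ`. -/
theorem minres_at_grade {n : ℕ} (A : Matrix (Fin n) (Fin n) ℝ) (hA : A.IsSymm)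
    (b : Fin n → ℝ) (hb : b ≠ 0) (g : ℕ) (hg : IsGrade A b g)
    (p : Fin n → ℝ) (hmem : p ∈ Krylov A b g)
    (hmin : ∀ q ∈ Krylov A b g, euclNorm (b - A.mulVec p) ≤ euclNorm (b - A.mulVec q)) :
    A.mulVec (b - A.mulVec p) = 0 ∧
      ∀ q : Fin n → ℝ, euclNorm (b - A.mulVec p) ≤ euclNorm (b - A.mulVec q) := by
  set r : Fin n → ℝ := b - A.mulVec p with hr
  -- symmetry of the bilinear form
  have sym : ∀ u v : Fin n → ℝ, A.mulVec u ⬝ᵥ v = u ⬝ᵥ A.mulVec v := by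
    intro u v
    rw [dotProduct_mulVec, ← Matrix.mulVec_transpose, hA.eq]
  -- K_{g+1} = K_g
  have hle : Krylov A b g ≤ Krylov A b (g + 1) := by
    apply Submodule.span_mono
    rintro _ ⟨i, rfl⟩
    exact ⟨⟨i, by omega⟩, rfl⟩
  have hEq : Krylov A b (g + 1) = Krylov A b g := by
    refine (Submodule.eq_of_le_of_finrank_le hle ?_).symm
    rw [hg.2.2 (g + 1) (lt_add_one g), hg.2.1 g le_rfl]
  -- invariance of K_g under A
  have hInv : ∀ v ∈ Krylov A b g, A.mulVec v ∈ Krylov A b g := by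
    intro v hv
    have hmap : A.mulVec v ∈ Submodule.map A.mulVecLin (Krylov A b g) :=
      ⟨v, hv, rfl⟩
    have hsub : Submodule.map A.mulVecLin (Krylov A b g) ≤ Krylov A b g := by
      rw [Krylov, Submodule.map_span]
      apply Submodule.span_le.2
      rintro _ ⟨_, ⟨i, rfl⟩, rfl⟩
      show A.mulVecLin ((A ^ (i : ℕ)).mulVec b) ∈ Krylov A b g
      rw [← hEq]
      have : A.mulVecLin ((A ^ (i : ℕ)).mulVec b) = (A ^ ((i : ℕ) + 1)).mulVec b := by
        simp [Matrix.mulVecLin_apply, Matrix.mulVec_mulVec, pow_succ']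
      rw [this]
      exact Submodule.subset_span ⟨⟨(i : ℕ) + 1, by omega⟩, rfl⟩
    exact hsub hmap
  -- b ∈ K_g
  have hbK : b ∈ Krylov A b g := by
    have : (A ^ (0 : ℕ)).mulVec b = b := by simp
    exact Submodule.subset_span ⟨⟨0, hg.1⟩, this⟩
  have hrK : r ∈ Krylov A b g := by
    exact Submodule.sub_mem _ hbK (hInv p hmem)
  -- orthogonality: r ⊥ A K_g
  have horth : ∀ v ∈ Krylov A b g, r ⬝ᵥ A.mulVec v = 0 := by
    intro v hv
    set c : ℝ := r ⬝ᵥ A.mulVec v with hc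
    set d : ℝ := A.mulVec v ⬝ᵥ A.mulVec v with hd
    have key : ∀ t : ℝ, 0 ≤ t ^ 2 * d - 2 * t * c := by
      intro t
      have hq : p + t • v ∈ Krylov A b g :=
        Submodule.add_mem _ hmem (Submodule.smul_mem _ t hv)
      have h1 := (euclNorm_le_iff _ _).1 (hmin _ hq)
      have h2 : b - A.mulVec (p + t • v) = r - t • A.mulVec v := by
        rw [hr, Matrix.mulVec_add, Matrix.mulVec_smul]
        abel
      rw [h2] at h1
      have h3 : (r - t • A.mulVec v) ⬝ᵥ (r - t • A.mulVec v)
          = r ⬝ᵥ r - 2 * t * c + t ^ 2 * d := by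
        simp only [sub_dotProduct, dotProduct_sub, smul_dotProduct, dotProduct_smul,
          smul_eq_mul, hc, hd]
        rw [dotProduct_comm (A.mulVec v) r]
        ring
      rw [h3] at h1
      linarith
    by_cases hd0 : d = 0
    · have : A.mulVec v = 0 := dot_self_eq_zero hd0
      rw [hc, this, dotProduct_zero]
    · have hdpos : 0 < d := lt_of_le_of_ne (dot_self_nonneg _) (Ne.symm hd0)
      have h := key (c / d)
      have hc2 : c ^ 2 ≤ 0 := by
        have : (c / d) ^ 2 * d - 2 * (c / d) * c = -(c ^ 2) / d := by
          field_simp; ring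
        rw [this, le_div_iff₀ hdpos] at h
        nlinarith
      have : c = 0 := by nlinarith [sq_nonneg c]
      exact this
  -- Ar = 0
  have hAr : A.mulVec r = 0 := by
    apply dot_self_eq_zero
    rw [sym r (A.mulVec r)]
    exact horth (A.mulVec r) (hInv r hrK)
  refine ⟨hAr, ?_⟩
  intro q
  rw [euclNorm_le_iff]
  have h2 : b - A.mulVec q = r + A.mulVec (p - q) := by
    rw [hr, Matrix.mulVec_sub]; abel
  rw [h2]
  have h3 : r ⬝ᵥ A.mulVec (p - q) = 0 := by
    rw [← sym, hAr, zero_dotProduct]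
  have : (r + A.mulVec (p - q)) ⬝ᵥ (r + A.mulVec (p - q))
      = r ⬝ᵥ r + 2 * (r ⬝ᵥ A.mulVec (p - q)) + (A.mulVec (p - q)) ⬝ᵥ (A.mulVec (p - q)) := by
    simp only [add_dotProduct, dotProduct_add]
    rw [dotProduct_comm (A.mulVec (p - q)) r]
    ring
  rw [this, h3]
  have := dot_self_nonneg (A.mulVec (p - q))
  linarith
end

section
/- Let f : ℝⁿ → ℝ be differentiable with ∇f Lipschitz continuous on ℝⁿ with constant L > 0, let σ ∈ (0,1), and let x, d ∈ ℝⁿ with d ≠ 0 and ∇f(x)ᵀd < 0. Then the Armijo condition f(x + λ d) − f(x) ≤ σ λ ∇f(x)ᵀd holds for every λ ∈ (0, 2(1−σ)(−∇f(x)ᵀd)/(L‖d‖²)]. -/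
open scoped RealInnerProductSpace

lemma descent_lemma_aux {n : ℕ} (f : EuclideanSpace ℝ (Fin n) → ℝ)
    (hf : Differentiable ℝ f) (L : ℝ)
    (hLip : ∀ y z : EuclideanSpace ℝ (Fin n), ‖gradient f y - gradient f z‖ ≤ L * ‖y - z‖)
    (x v : EuclideanSpace ℝ (Fin n)) :
    f (x + v) - f x ≤ ⟪gradient f x, v⟫ + L / 2 * ‖v‖ ^ 2 := by
  set g := gradient f x with hg
  set h : ℝ → ℝ := fun t => f (x + t • v) - t * ⟪g, v⟫ - L * ‖v‖ ^ 2 * t ^ 2 / 2 with hh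
  have hderiv : ∀ t : ℝ, HasDerivAt h
      (⟪gradient f (x + t • v), v⟫ - ⟪g, v⟫ - L * ‖v‖ ^ 2 * t) t := by
    intro t
    have hc : HasDerivAt (fun t : ℝ => x + t • v) v t := by
      simpa using ((hasDerivAt_id t).smul_const v).const_add x
    have hgrad := (hf (x + t • v)).hasGradientAt
    have h1 : HasDerivAt (fun t : ℝ => f (x + t • v)) ⟪gradient f (x + t • v), v⟫ t := by
      have := hgrad.hasFDerivAt.comp_hasDerivAt t hc
      exact this
    have h2 : HasDerivAt (fun t : ℝ => t * ⟪g, v⟫) ⟪g, v⟫ t := by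
      simpa using (hasDerivAt_id t).mul_const ⟪g, v⟫
    have h3 : HasDerivAt (fun t : ℝ => L * ‖v‖ ^ 2 * t ^ 2 / 2) (L * ‖v‖ ^ 2 * t) t := by
      have := ((hasDerivAt_pow 2 t).const_mul (L * ‖v‖ ^ 2)).div_const 2
      exact this.congr_deriv (by push_cast; ring)
    exact (h1.sub h2).sub h3
  have hanti : AntitoneOn h (Set.Icc (0 : ℝ) 1) := by
    apply antitoneOn_of_deriv_nonpos (convex_Icc 0 1)
    · exact fun t _ => ((hderiv t).differentiableAt).continuousAt.continuousWithinAt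
    · exact fun t _ => ((hderiv t).differentiableAt).differentiableWithinAt
    · intro t ht
      rw [interior_Icc] at ht
      rw [(hderiv t).deriv]
      have hcs : ⟪gradient f (x + t • v) - g, v⟫ ≤ ‖gradient f (x + t • v) - g‖ * ‖v‖ :=
        real_inner_le_norm _ _
      have hlip : ‖gradient f (x + t • v) - g‖ ≤ L * ‖t • v‖ := by
        simpa using hLip (x + t • v) x
      have hnorm : ‖t • v‖ = t * ‖v‖ := by
        rw [norm_smul, Real.norm_eq_abs, abs_of_pos ht.1]
      have hsub : ⟪gradient f (x + t • v) - g, v⟫ = ⟪gradient f (x + t • v), v⟫ - ⟪g, v⟫ :=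
        inner_sub_left _ _ _
      have hv : (0:ℝ) ≤ ‖v‖ := norm_nonneg v
      rw [hnorm] at hlip
      have h4 : ‖gradient f (x + t • v) - g‖ * ‖v‖ ≤ L * (t * ‖v‖) * ‖v‖ :=
        mul_le_mul_of_nonneg_right hlip hv
      nlinarith [hcs, hsub, h4]
  have h01 := hanti (Set.mem_Icc.mpr ⟨le_refl 0, zero_le_one⟩)
    (Set.mem_Icc.mpr ⟨zero_le_one, le_refl 1⟩) zero_le_one
  simp only [hh, zero_smul, add_zero, one_smul] at h01
  nlinarith [h01]

/-- Let `f : ℝⁿ → ℝ` be differentiable with `L`-Lipschitz gradient, let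
`σ ∈ (0,1)`, and `d ≠ 0` with `∇f(x)ᵀd < 0`. Then the Armijo condition
`f(x + λd) − f(x) ≤ σλ ∇f(x)ᵀd` holds for every `λ ∈ (0, 2(1−σ)(−∇f(x)ᵀd)/(L‖d‖²)]`. -/
theorem armijo_stepsize_lower_bound {n : ℕ} (f : EuclideanSpace ℝ (Fin n) → ℝ)
    (hf : Differentiable ℝ f) (L : ℝ) (hL : 0 < L)
    (hLip : ∀ y z : EuclideanSpace ℝ (Fin n), ‖gradient f y - gradient f z‖ ≤ L * ‖y - z‖)
    (σ : ℝ) (hσ : σ ∈ Set.Ioo (0 : ℝ) 1)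
    (x d : EuclideanSpace ℝ (Fin n)) (hd : d ≠ 0)
    (hgd : ⟪gradient f x, d⟫ < 0) :
    ∀ lam ∈ Set.Ioc (0 : ℝ) (2 * (1 - σ) * (-⟪gradient f x, d⟫) / (L * ‖d‖ ^ 2)),
      f (x + lam • d) - f x ≤ σ * lam * ⟪gradient f x, d⟫ := by
  intro lam hlam
  obtain ⟨hlam0, hlam1⟩ := hlam
  have hdes := descent_lemma_aux f hf L hLip x (lam • d)
  have hinner : ⟪gradient f x, lam • d⟫ = lam * ⟪gradient f x, d⟫ :=
    real_inner_smul_right _ _ _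
  have hnorm : ‖lam • d‖ ^ 2 = lam ^ 2 * ‖d‖ ^ 2 := by
    rw [norm_smul, Real.norm_eq_abs, mul_pow, sq_abs]
  rw [hinner, hnorm] at hdes
  have hdpos : (0:ℝ) < ‖d‖ ^ 2 := by
    have := norm_pos_iff.mpr hd
    positivity
  have hLd : (0:ℝ) < L * ‖d‖ ^ 2 := by positivity
  have hbound : lam * (L * ‖d‖ ^ 2) ≤ 2 * (1 - σ) * (-⟪gradient f x, d⟫) := by
    rw [← le_div_iff₀ hLd]
    exact hlam1
  nlinarith [hdes, hbound, hlam0, hσ.1, hσ.2]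
end

section
/- Let f : ℝⁿ → ℝ be twice continuously differentiable with Hessian ∇²f Lipschitz continuous on ℝⁿ with constant L_H > 0, let σ ∈ (0,1), and let x, d ∈ ℝⁿ with d ≠ 0, ∇f(x)ᵀd ≤ 0, and dᵀ∇²f(x)d < 0. Then the modified Armijo condition f(x + λ d) − f(x) ≤ σ λ ∇f(x)ᵀd + (σ/2) λ² dᵀ∇²f(x)d holds for every λ ∈ (0, 3(1−σ)(−dᵀ∇²f(x)d)/(L_H‖d‖³)]. -/
open scoped RealInnerProductSpace

private lemma nonpos_of_hasDerivAt_nonpos (lam : ℝ) (h h' : ℝ → ℝ)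
    (hder : ∀ s, HasDerivAt h (h' s) s) (h0 : h 0 = 0)
    (hle : ∀ s ∈ Set.Ioo (0:ℝ) lam, h' s ≤ 0) :
    ∀ t ∈ Set.Icc (0:ℝ) lam, h t ≤ 0 := by
  intro t ht
  have hdiff : Differentiable ℝ h := fun s => (hder s).differentiableAt
  have hanti : AntitoneOn h (Set.Icc 0 lam) := by
    apply antitoneOn_of_deriv_nonpos (convex_Icc 0 lam) hdiff.continuous.continuousOn
      (fun s _ => (hdiff s).differentiableWithinAt)
    intro s hs
    rw [interior_Icc] at hs
    rw [(hder s).deriv]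
    exact hle s hs
  have := hanti (Set.left_mem_Icc.mpr (ht.1.trans ht.2)) ht ht.1
  simpa [h0] using this

/-- Let `f : ℝⁿ → ℝ` be twice continuously differentiable with
`L_H`-Lipschitz Hessian, `σ ∈ (0,1)`, and `d ≠ 0` with `∇f(x)ᵀd ≤ 0` and
`dᵀ∇²f(x)d < 0`. Then the modified Armijo condition
`f(x + λd) − f(x) ≤ σλ ∇f(x)ᵀd + (σ/2) λ² dᵀ∇²f(x)d` holds for every
`λ ∈ (0, 3(1−σ)(−dᵀ∇²f(x)d)/(L_H‖d‖³)]`.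
(The Hessian is `fderiv ℝ (gradient f)`, whose operator norm on Euclidean space is the
spectral norm.) -/
theorem npc_forward_stepsize_bound {n : ℕ} (f : EuclideanSpace ℝ (Fin n) → ℝ)
    (hf : ContDiff ℝ 2 f) (LH : ℝ) (hLH : 0 < LH)
    (hLip : ∀ y z : EuclideanSpace ℝ (Fin n),
      ‖fderiv ℝ (gradient f) y - fderiv ℝ (gradient f) z‖ ≤ LH * ‖y - z‖)
    (σ : ℝ) (hσ : σ ∈ Set.Ioo (0 : ℝ) 1)
    (x d : EuclideanSpace ℝ (Fin n)) (hd : d ≠ 0)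
    (hgd : ⟪gradient f x, d⟫ ≤ 0)
    (hcurv : ⟪fderiv ℝ (gradient f) x d, d⟫ < 0) :
    ∀ lam ∈ Set.Ioc (0 : ℝ)
        (3 * (1 - σ) * (-⟪fderiv ℝ (gradient f) x d, d⟫) / (LH * ‖d‖ ^ 3)),
      f (x + lam • d) - f x ≤
        σ * lam * ⟪gradient f x, d⟫ +
          σ / 2 * lam ^ 2 * ⟪fderiv ℝ (gradient f) x d, d⟫ := by
  intro lam hlam
  obtain ⟨hlam0, hlamle⟩ := hlam
  set H := fderiv ℝ (gradient f) with hH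
  set c : ℝ := ⟪H x d, d⟫ with hc
  set gd : ℝ := ⟪gradient f x, d⟫ with hgddef
  set M : ℝ := LH * ‖d‖ ^ 3 with hM
  have hdpos : (0:ℝ) < ‖d‖ := norm_pos_iff.mpr hd
  have hMpos : 0 < M := by positivity
  have hf1 : ContDiff ℝ 1 f := hf.of_le (by norm_num)
  have hfd : Differentiable ℝ f := hf1.differentiable one_ne_zero
  have hgradC1 : ContDiff ℝ 1 (gradient f) := by
    have h := hf.fderiv_right (m := 1) (by norm_num)
    have heq : gradient f = fun y => (InnerProductSpace.toDual ℝ _).symm (fderiv ℝ f y) := by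
      funext y; rfl
    rw [heq]
    exact ((InnerProductSpace.toDual ℝ (EuclideanSpace ℝ (Fin n))).symm.toContinuousLinearEquiv :
      StrongDual ℝ (EuclideanSpace ℝ (Fin n)) ≃L[ℝ]
        EuclideanSpace ℝ (Fin n)).contDiff.comp h
  have hgradD : Differentiable ℝ (gradient f) := hgradC1.differentiable one_ne_zero
  set γ : ℝ → EuclideanSpace ℝ (Fin n) := fun t => x + t • d with hγ
  have hγd : ∀ t : ℝ, HasDerivAt γ d t := by
    intro t
    simpa [hγ] using ((hasDerivAt_id t).smul_const d).const_add x
  set φ : ℝ → ℝ := fun t => f (γ t) with hφ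
  set ψ : ℝ → ℝ := fun t => ⟪gradient f (γ t), d⟫ with hψ
  have key_fderiv : ∀ y, fderiv ℝ f y d = ⟪gradient f y, d⟫ := by
    intro y
    rw [gradient, InnerProductSpace.toDual_symm_apply]
  have hφd : ∀ t : ℝ, HasDerivAt φ (ψ t) t := by
    intro t
    have := ((hfd (γ t)).hasFDerivAt).comp_hasDerivAt t (hγd t)
    exact this.congr_deriv (key_fderiv _)
  have hψd : ∀ t : ℝ, HasDerivAt ψ (⟪H (γ t) d, d⟫) t := by
    intro t
    have h1 : HasDerivAt (fun s => gradient f (γ s)) (H (γ t) d) t :=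
      ((hgradD (γ t)).hasFDerivAt).comp_hasDerivAt t (hγd t)
    have h2 : HasDerivAt (fun _ : ℝ => d) (0 : EuclideanSpace ℝ (Fin n)) t :=
      hasDerivAt_const t d
    have := h1.inner ℝ h2
    simpa [hψ] using this
  have hψ0 : ψ 0 = gd := by simp [hψ, hγ, hgddef]
  have hcurve : ∀ t : ℝ, 0 ≤ t → ⟪H (γ t) d, d⟫ ≤ c + M * t := by
    intro t ht
    have h1 : ⟪H (γ t) d, d⟫ - c = ⟪(H (γ t) - H x) d, d⟫ := by
      simp [hc, inner_sub_left]
    have h2 : ⟪(H (γ t) - H x) d, d⟫ ≤ ‖(H (γ t) - H x) d‖ * ‖d‖ :=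
      real_inner_le_norm _ _
    have h3 : ‖(H (γ t) - H x) d‖ ≤ ‖H (γ t) - H x‖ * ‖d‖ :=
      (H (γ t) - H x).le_opNorm d
    have h4 : ‖H (γ t) - H x‖ ≤ LH * (t * ‖d‖) := by
      have hsub : γ t - x = t • d := by simp [hγ]
      have := hLip (γ t) x
      rwa [hsub, norm_smul, Real.norm_eq_abs, abs_of_nonneg ht] at this
    have h5 : ‖(H (γ t) - H x) d‖ ≤ LH * (t * ‖d‖) * ‖d‖ :=
      h3.trans (mul_le_mul_of_nonneg_right h4 (norm_nonneg d))
    have h6 : ⟪(H (γ t) - H x) d, d⟫ ≤ LH * (t * ‖d‖) * ‖d‖ * ‖d‖ :=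
      h2.trans (mul_le_mul_of_nonneg_right h5 (norm_nonneg d))
    have h7 : M * t = LH * (t * ‖d‖) * ‖d‖ * ‖d‖ := by rw [hM]; ring
    linarith
  -- Step A : ψ t ≤ gd + c t + M t²/2 on [0, lam]
  have stepA : ∀ t ∈ Set.Icc (0:ℝ) lam, ψ t - (gd + c * t + M * t ^ 2 / 2) ≤ 0 := by
    apply nonpos_of_hasDerivAt_nonpos lam _ (fun s => ⟪H (γ s) d, d⟫ - (c + M * s))
    · intro s
      have := (hψd s).sub ((((hasDerivAt_id s).const_mul c).const_add gd).add
        (((hasDerivAt_pow 2 s).const_mul M).div_const 2))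
      refine this.congr_deriv ?_
      simp [hasDerivAt_id]; ring
    · simp [hψ0]
    · intro s hs
      have := hcurve s hs.1.le
      linarith
  -- Step B : φ lam ≤ φ 0 + gd lam + c lam²/2 + M lam³/6
  have stepB : φ lam - (φ 0 + gd * lam + c * lam ^ 2 / 2 + M * lam ^ 3 / 6) ≤ 0 := by
    have := nonpos_of_hasDerivAt_nonpos lam
      (fun t => φ t - (φ 0 + gd * t + c * t ^ 2 / 2 + M * t ^ 3 / 6))
      (fun s => ψ s - (gd + c * s + M * s ^ 2 / 2))
      (fun s => by
        have := (hφd s).sub (((((hasDerivAt_id s).const_mul gd).const_add (φ 0)).add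
          (((hasDerivAt_pow 2 s).const_mul c).div_const 2)).add
          (((hasDerivAt_pow 3 s).const_mul M).div_const 6))
        refine this.congr_deriv ?_
        simp; ring)
      (by simp)
      (fun s hs => stepA s ⟨hs.1.le, hs.2.le⟩)
      lam (Set.right_mem_Icc.mpr hlam0.le)
    simpa using this
  have hφlam : f (x + lam • d) - f x ≤ gd * lam + c * lam ^ 2 / 2 + M * lam ^ 3 / 6 := by
    have : φ lam = f (x + lam • d) := by simp [hφ, hγ]
    have h0 : φ 0 = f x := by simp [hφ, hγ]
    linarith [stepB, this.ge, h0.le]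
  -- arithmetic
  have hMl : M * lam ≤ 3 * (1 - σ) * (-c) := by
    have h := (le_div_iff₀ hMpos).mp hlamle
    linarith
  have hσ0 := hσ.1
  have hσ1 := hσ.2
  have h1 : gd * lam + c * lam ^ 2 / 2 + M * lam ^ 3 / 6 ≤
      σ * lam * gd + σ / 2 * lam ^ 2 * c := by
    nlinarith [mul_nonneg hlam0.le hlam0.le, mul_le_mul_of_nonneg_right hMl
      (mul_nonneg hlam0.le hlam0.le), mul_nonneg (mul_nonneg (sub_nonneg.mpr hσ1.le) hlam0.le)
      (neg_nonneg.mpr hgd)]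
  linarith [hφlam]
end

section
/- Let A be a symmetric real n×n matrix and b ∈ ℝⁿ with bᵀAb > 0 and Ab ≠ 0. Set p₁ = (bᵀAb/‖Ab‖²) b and r₁ = b − A p₁. If r₁ᵀ A r₁ > 0, then bᵀAb/‖Ab‖² ≥ 1/‖A‖, i.e., ‖Ab‖² ≤ ‖A‖ · (bᵀAb), where ‖A‖ denotes the spectral norm of A. -/
open Matrix

/-- The spectral (operator 2-) norm of a real matrix: the supremum of `‖A x‖` over
Euclidean unit vectors `x`. -/
noncomputable def specNorm {n : ℕ} (A : Matrix (Fin n) (Fin n) ℝ) : ℝ :=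
  sSup {c : ℝ | ∃ x : Fin n → ℝ, euclNorm x = 1 ∧ c = euclNorm (A.mulVec x)}

lemma euclNorm_eq_norm {n : ℕ} (v : Fin n → ℝ) :
    euclNorm v = ‖(WithLp.equiv 2 (Fin n → ℝ)).symm v‖ := by
  rw [EuclideanSpace.norm_eq]; simp [euclNorm, sq_abs]

lemma euclNorm_smul {n : ℕ} (c : ℝ) (v : Fin n → ℝ) :
    euclNorm (c • v) = |c| * euclNorm v := by
  simp only [euclNorm_eq_norm]
  rw [show (WithLp.equiv 2 (Fin n → ℝ)).symm (c • v)
      = c • (WithLp.equiv 2 (Fin n → ℝ)).symm v from rfl, norm_smul, Real.norm_eq_abs]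

lemma euclNorm_pos {n : ℕ} {v : Fin n → ℝ} (hv : v ≠ 0) : 0 < euclNorm v := by
  rw [euclNorm_eq_norm]
  simpa using hv

lemma sq_euclNorm {n : ℕ} (v : Fin n → ℝ) : euclNorm v ^ 2 = v ⬝ᵥ v := by
  have h : 0 ≤ ∑ i, v i ^ 2 := Finset.sum_nonneg fun i _ => sq_nonneg _
  rw [euclNorm, Real.sq_sqrt h, dotProduct]
  exact Finset.sum_congr rfl fun i _ => (sq (v i)).symm ▸ rfl

lemma dotProduct_le {n : ℕ} (v w : Fin n → ℝ) :
    v ⬝ᵥ w ≤ euclNorm v * euclNorm w := by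
  have := real_inner_le_norm ((WithLp.equiv 2 (Fin n → ℝ)).symm v)
    ((WithLp.equiv 2 (Fin n → ℝ)).symm w)
  rw [PiLp.inner_apply] at this
  simpa [euclNorm_eq_norm, dotProduct, RCLike.inner_apply, mul_comm] using this

lemma euclNorm_mulVec_le {n : ℕ} (A : Matrix (Fin n) (Fin n) ℝ) (x : Fin n → ℝ) :
    euclNorm (A.mulVec x) ≤ specNorm A * euclNorm x := by
  set T := Matrix.toEuclideanCLM (𝕜 := ℝ) A with hT
  have key : ∀ y : Fin n → ℝ, euclNorm (A.mulVec y) = ‖T ((WithLp.equiv 2 _).symm y)‖ := by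
    intro y
    rw [show T ((WithLp.equiv 2 _).symm y) = (WithLp.equiv 2 _).symm (A.mulVec y) from rfl,
      ← euclNorm_eq_norm]
  have hbdd : BddAbove {c : ℝ | ∃ x : Fin n → ℝ, euclNorm x = 1 ∧ c = euclNorm (A.mulVec x)} := by
    refine ⟨‖T‖, fun c hc => ?_⟩
    obtain ⟨y, hy1, rfl⟩ := hc
    rw [key y]
    calc ‖T ((WithLp.equiv 2 _).symm y)‖ ≤ ‖T‖ * ‖(WithLp.equiv 2 _).symm y‖ := T.le_opNorm _
      _ = ‖T‖ := by rw [← euclNorm_eq_norm, hy1, mul_one]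
  rcases eq_or_ne x 0 with rfl | hx
  · simp [euclNorm, Matrix.mulVec_zero]
  · have hxpos := euclNorm_pos hx
    set u := (euclNorm x)⁻¹ • x with hu
    have hu1 : euclNorm u = 1 := by
      rw [hu, euclNorm_smul, abs_of_pos (inv_pos.mpr hxpos), inv_mul_cancel₀ hxpos.ne']
    have hmem : euclNorm (A.mulVec u) ∈
        {c : ℝ | ∃ x : Fin n → ℝ, euclNorm x = 1 ∧ c = euclNorm (A.mulVec x)} :=
      ⟨u, hu1, rfl⟩
    have hle := le_csSup hbdd hmem
    have hAu : euclNorm (A.mulVec u) = (euclNorm x)⁻¹ * euclNorm (A.mulVec x) := by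
      rw [hu, Matrix.mulVec_smul, euclNorm_smul, abs_of_pos (inv_pos.mpr hxpos)]
    rw [hAu] at hle
    calc euclNorm (A.mulVec x) = euclNorm x * ((euclNorm x)⁻¹ * euclNorm (A.mulVec x)) := by
          field_simp
      _ ≤ euclNorm x * specNorm A := by
          exact mul_le_mul_of_nonneg_left hle hxpos.le
      _ = specNorm A * euclNorm x := mul_comm _ _

/-- Let `A` be symmetric, `b` with `bᵀAb > 0` and `Ab ≠ 0`. Set
`p₁ = (bᵀAb/‖Ab‖²) b` and `r₁ = b − A p₁`. If `r₁ᵀ A r₁ > 0`, then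
`bᵀAb/‖Ab‖² ≥ 1/‖A‖`, i.e., `‖Ab‖² ≤ ‖A‖ (bᵀAb)`. -/
theorem curvature_ratio_bound {n : ℕ} (A : Matrix (Fin n) (Fin n) ℝ) (hA : A.IsSymm)
    (b : Fin n → ℝ) (hpos : 0 < b ⬝ᵥ A.mulVec b) (hAb : A.mulVec b ≠ 0)
    (r₁ : Fin n → ℝ)
    (hr₁ : r₁ = b - A.mulVec (((b ⬝ᵥ A.mulVec b) / euclNorm (A.mulVec b) ^ 2) • b))
    (hnpc : 0 < r₁ ⬝ᵥ A.mulVec r₁) :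
    1 / specNorm A ≤ (b ⬝ᵥ A.mulVec b) / euclNorm (A.mulVec b) ^ 2 ∧
      euclNorm (A.mulVec b) ^ 2 ≤ specNorm A * (b ⬝ᵥ A.mulVec b) := by
  set c := b ⬝ᵥ A.mulVec b with hc
  set N := euclNorm (A.mulVec b) ^ 2 with hNdef
  have hNpos : 0 < N := by
    rw [hNdef]; exact pow_pos (euclNorm_pos hAb) 2
  have hN : N = A.mulVec b ⬝ᵥ A.mulVec b := sq_euclNorm _
  set α := c / N with hα
  -- symmetry
  have hsymm : ∀ x y : Fin n → ℝ, x ⬝ᵥ A.mulVec y = A.mulVec x ⬝ᵥ y := by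
    intro x y
    rw [Matrix.dotProduct_mulVec, ← Matrix.mulVec_transpose, hA.eq]
  set t := A.mulVec b ⬝ᵥ A.mulVec (A.mulVec b) with ht
  -- expand hnpc
  have hr₁' : r₁ = b - α • A.mulVec b := by
    rw [hr₁, Matrix.mulVec_smul]
  have hexp : r₁ ⬝ᵥ A.mulVec r₁ = α ^ 2 * t - c := by
    rw [hr₁']
    have hbAAb : b ⬝ᵥ A.mulVec (A.mulVec b) = N := by rw [hsymm, hN]
    simp only [Matrix.mulVec_sub, Matrix.mulVec_smul, sub_dotProduct,
      dotProduct_sub, smul_dotProduct, dotProduct_smul,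
      smul_eq_mul]
    rw [hbAAb, ← hc, ← hN, ← ht]
    have hαN : α * N = c := div_mul_cancel₀ c hNpos.ne'
    linear_combination (-2 : ℝ) * hαN
  have ht_lb : N ^ 2 / c < t := by
    rw [hexp] at hnpc
    rw [div_lt_iff₀ hpos]
    have h2 : c < α ^ 2 * t := by linarith
    have hα2 : α ^ 2 = c ^ 2 / N ^ 2 := by rw [hα]; ring
    rw [hα2, div_mul_eq_mul_div, lt_div_iff₀ (pow_pos hNpos 2)] at h2
    nlinarith [h2, mul_pos hpos hNpos]
  have ht_ub : t ≤ specNorm A * N := by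
    calc t ≤ euclNorm (A.mulVec b) * euclNorm (A.mulVec (A.mulVec b)) :=
          dotProduct_le _ _
      _ ≤ euclNorm (A.mulVec b) * (specNorm A * euclNorm (A.mulVec b)) := by
          apply mul_le_mul_of_nonneg_left (euclNorm_mulVec_le A _)
          exact (euclNorm_pos hAb).le
      _ = specNorm A * N := by rw [hNdef]; ring
  have hmain : N ≤ specNorm A * c := by
    have h1 : N ^ 2 / c < specNorm A * N := lt_of_lt_of_le ht_lb ht_ub
    rw [div_lt_iff₀ hpos] at h1
    nlinarith
  have hS : 0 < specNorm A := by nlinarith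
  refine ⟨?_, hmain⟩
  rw [div_le_div_iff₀ hS hNpos]
  linarith
end

section
/- Let f : ℝⁿ → ℝ be twice continuously differentiable with Hessian ∇²f Lipschitz continuous on ℝⁿ with constant L_H > 0. Let x, d ∈ ℝⁿ, write g = ∇f(x) and B = ∇²f(x), let ζ > 0 and σ ∈ (0, 1/2), and suppose that −gᵀd ≥ dᵀ(B + ζI)d and dᵀ(B + ζI)d ≥ (ζ/2)‖d‖². Then f(x + d) − f(x) − σ gᵀd ≤ ((σ/2 − 3/4) ζ + (L_H/6)‖d‖) ‖d‖². -/
open scoped RealInnerProductSpace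
set_option maxHeartbeats 1000000

theorem taylor2_bound {n : ℕ} (f : EuclideanSpace ℝ (Fin n) → ℝ)
    (hf : ContDiff ℝ 2 f) (LH : ℝ) (hLH : 0 ≤ LH)
    (hLip : ∀ y z : EuclideanSpace ℝ (Fin n),
      ‖fderiv ℝ (gradient f) y - fderiv ℝ (gradient f) z‖ ≤ LH * ‖y - z‖)
    (x d : EuclideanSpace ℝ (Fin n)) :
    f (x + d) - f x - ⟪gradient f x, d⟫ - (1/2) * ⟪fderiv ℝ (gradient f) x d, d⟫ ≤
      LH / 6 * ‖d‖ ^ 3 := by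
  set G := gradient f with hGdef
  set H := fderiv ℝ G with hHdef
  have hfd : Differentiable ℝ f := hf.differentiable (by norm_num)
  have hG1 : ContDiff ℝ 1 G := by
    have h1 : ContDiff ℝ 1 (fderiv ℝ f) := hf.fderiv_right (by norm_num)
    exact ((InnerProductSpace.toDual ℝ (EuclideanSpace ℝ (Fin n))).symm.contDiff).comp h1
  have hGd : Differentiable ℝ G := hG1.differentiable (by norm_num)
  -- inner product with gradient equals fderiv
  have hinner : ∀ y v : EuclideanSpace ℝ (Fin n), ⟪G y, v⟫ = fderiv ℝ f y v := fun y v =>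
    InnerProductSpace.toDual_symm_apply
  -- curve c t = x + t • d
  have hc : ∀ t : ℝ, HasDerivAt (fun s : ℝ => x + s • d) d t := by
    intro t
    simpa using ((hasDerivAt_id t).smul_const d).const_add x
  -- derivative of t ↦ G (x + t • d)
  have hGc : ∀ t : ℝ, HasDerivAt (fun s : ℝ => G (x + s • d)) (H (x + t • d) d) t := by
    intro t
    exact ((hGd (x + t • d)).hasFDerivAt).comp_hasDerivAt t (hc t)
  -- derivative of t ↦ f (x + t • d)
  have hfc : ∀ t : ℝ, HasDerivAt (fun s : ℝ => f (x + s • d)) (⟪G (x + t • d), d⟫) t := by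
    intro t
    rw [hinner]
    exact ((hfd (x + t • d)).hasFDerivAt).comp_hasDerivAt t (hc t)
  -- Step 1: gradient Taylor bound
  have key1 : ∀ t ∈ Set.Icc (0:ℝ) 1,
      ‖G (x + t • d) - G x - t • (H x d)‖ ≤ LH * ‖d‖ ^ 2 / 2 * t ^ 2 := by
    set u : ℝ → EuclideanSpace ℝ (Fin n) := fun t => G (x + t • d) - G x - t • (H x d) with hu
    have hu' : ∀ t : ℝ, HasDerivAt u (H (x + t • d) d - H x d) t := by
      intro t
      have h1 : HasDerivAt (fun s : ℝ => G (x + s • d) - G x) (H (x + t • d) d) t :=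
        (hGc t).sub_const (G x)
      have h2 : HasDerivAt (fun s : ℝ => s • (H x d)) (H x d) t := by
        simpa using (hasDerivAt_id t).smul_const (H x d)
      exact h1.sub h2
    have hB : ∀ t : ℝ, HasDerivAt (fun s : ℝ => LH * ‖d‖ ^ 2 / 2 * s ^ 2)
        (LH * ‖d‖ ^ 2 * t) t := by
      intro t
      have := (hasDerivAt_pow 2 t).const_mul (LH * ‖d‖ ^ 2 / 2)
      simpa using this.congr_deriv (by ring)
    intro t ht
    have := image_norm_le_of_norm_deriv_right_le_deriv_boundary
      (f := u) (f' := fun t => H (x + t • d) d - H x d) (a := 0) (b := 1)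
      (fun s _ => ((hu' s).continuousAt).continuousWithinAt)
      (fun s _ => (hu' s).hasDerivWithinAt)
      (by simp [hu]) hB ?_ ht
    · simpa [hu] using this
    · intro s hs
      have hs0 : 0 ≤ s := hs.1
      calc ‖H (x + s • d) d - H x d‖ = ‖(H (x + s • d) - H x) d‖ := by
            simp [ContinuousLinearMap.sub_apply]
        _ ≤ ‖H (x + s • d) - H x‖ * ‖d‖ := (H (x + s • d) - H x).le_opNorm d
        _ ≤ LH * ‖x + s • d - x‖ * ‖d‖ := by
            gcongr; exact hLip _ _
        _ = LH * ‖d‖ ^ 2 * s := by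
            simp [norm_smul, abs_of_nonneg hs0]; ring
  -- Step 2: scalar Taylor bound
  set φ : ℝ → ℝ := fun t => f (x + t • d) - f x - t * ⟪G x, d⟫
      - t ^ 2 / 2 * ⟪H x d, d⟫ with hφ
  have hφ' : ∀ t : ℝ, HasDerivAt φ (⟪G (x + t • d) - G x - t • (H x d), d⟫) t := by
    intro t
    have h1 := (hfc t)
    have h2 : HasDerivAt (fun s : ℝ => s * ⟪G x, d⟫) (⟪G x, d⟫) t := by
      simpa using (hasDerivAt_id t).mul_const (⟪G x, d⟫)
    have h3 : HasDerivAt (fun s : ℝ => s ^ 2 / 2 * ⟪H x d, d⟫) (t * ⟪H x d, d⟫) t := by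
      have := ((hasDerivAt_pow 2 t).div_const 2).mul_const (⟪H x d, d⟫)
      exact this.congr_deriv (by push_cast; ring)
    have := ((h1.sub_const (f x)).sub h2).sub h3
    exact this.congr_deriv (by rw [inner_sub_left, inner_sub_left, real_inner_smul_left])
  have hBB : ∀ t : ℝ, HasDerivAt (fun s : ℝ => LH * ‖d‖ ^ 3 / 6 * s ^ 3)
      (LH * ‖d‖ ^ 3 / 2 * t ^ 2) t := by
    intro t
    have := (hasDerivAt_pow 3 t).const_mul (LH * ‖d‖ ^ 3 / 6)
    simpa using this.congr_deriv (by ring)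
  have key2 := image_norm_le_of_norm_deriv_right_le_deriv_boundary
    (f := φ) (f' := fun t => ⟪G (x + t • d) - G x - t • (H x d), d⟫) (a := 0) (b := 1)
    (fun s _ => ((hφ' s).continuousAt).continuousWithinAt)
    (fun s _ => (hφ' s).hasDerivWithinAt)
    (by simp [hφ]) hBB ?_ (Set.right_mem_Icc.mpr zero_le_one)
  · have h1 : φ 1 ≤ LH * ‖d‖ ^ 3 / 6 * 1 ^ 3 := le_trans (le_abs_self _) key2
    simp only [hφ, one_smul, one_pow, one_mul] at h1
    linarith [h1]
  · intro s hs
    have hs0 : 0 ≤ s := hs.1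
    calc ‖⟪G (x + s • d) - G x - s • (H x d), d⟫‖
        ≤ ‖G (x + s • d) - G x - s • (H x d)‖ * ‖d‖ := by
          exact (abs_real_inner_le_norm _ _)
      _ ≤ LH * ‖d‖ ^ 2 / 2 * s ^ 2 * ‖d‖ := by
          gcongr; exact key1 s ⟨hs.1, hs.2.le⟩
      _ = LH * ‖d‖ ^ 3 / 2 * s ^ 2 := by ring

/-- Let `f : ℝⁿ → ℝ` be twice continuously differentiable with
`L_H`-Lipschitz Hessian. With `g = ∇f(x)`, `B = ∇²f(x)`, `ζ > 0`, `σ ∈ (0, 1/2)`, assume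
`−gᵀd ≥ dᵀ(B + ζI)d` and `dᵀ(B + ζI)d ≥ (ζ/2)‖d‖²`. Then
`f(x + d) − f(x) − σ gᵀd ≤ ((σ/2 − 3/4) ζ + (L_H/6)‖d‖) ‖d‖²`.
(The Hessian is `fderiv ℝ (gradient f)`, and `dᵀ(B + ζI)d = ⟪B d, d⟫ + ζ‖d‖²`.) -/
theorem unit_step_decrease_estimate {n : ℕ} (f : EuclideanSpace ℝ (Fin n) → ℝ)
    (hf : ContDiff ℝ 2 f) (LH : ℝ) (hLH : 0 < LH)
    (hLip : ∀ y z : EuclideanSpace ℝ (Fin n),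
      ‖fderiv ℝ (gradient f) y - fderiv ℝ (gradient f) z‖ ≤ LH * ‖y - z‖)
    (x d : EuclideanSpace ℝ (Fin n)) (ζ σ : ℝ) (hζ : 0 < ζ)
    (hσ : σ ∈ Set.Ioo (0 : ℝ) (1 / 2))
    (h1 : ⟪fderiv ℝ (gradient f) x d, d⟫ + ζ * ‖d‖ ^ 2 ≤ -⟪gradient f x, d⟫)
    (h2 : ζ / 2 * ‖d‖ ^ 2 ≤ ⟪fderiv ℝ (gradient f) x d, d⟫ + ζ * ‖d‖ ^ 2) :
    f (x + d) - f x - σ * ⟪gradient f x, d⟫ ≤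
      ((σ / 2 - 3 / 4) * ζ + LH / 6 * ‖d‖) * ‖d‖ ^ 2 := by
  have hT := taylor2_bound f hf LH hLH.le hLip x d
  obtain ⟨hσ0, hσ2⟩ := hσ
  have e1 := mul_le_mul_of_nonneg_left h1 (by linarith : (0:ℝ) ≤ 1 - σ)
  have e2 := mul_le_mul_of_nonneg_left h2 (by linarith : (0:ℝ) ≤ 1/2 - σ)
  nlinarith [hT, e1, e2]
end
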